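/- arXiv:0706.2261 — 4 statements merged into one kernel-verified Lean document; each statement's English description precedes it below -/
import Mathlib

section
/- Let m⁺ ≥ 1, m⁻ ≤ -1 be integers, q⁺ = e⁺/m⁺, q⁻ = e⁻/m⁻ in lowest terms with q⁺ + q⁻ < 0, and Δ = m⁺ m⁻ (q⁺ + q⁻). Then both ⌊m⁻/(Δ m⁺)⌋ = -1 and ⌊m⁺/(Δ m⁻)⌋ = -1 hold if and only if q⁺ + q⁻ ≤ -max(1/(m⁺)², 1/(m⁻)²). -/
/-- Both ⌊m⁻/(Δm⁺)⌋ = -1 and ⌊m⁺/(Δm⁻)⌋ = -1 hold iff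
q⁺ + q⁻ ≤ -max(1/(m⁺)², 1/(m⁻)²), where Δ = m⁺m⁻(q⁺+q⁻). -/
theorem stmt_6 (mp mm ep em : ℤ) (hmp : 1 ≤ mp) (hmm : mm ≤ -1)
    (hcp : Int.gcd ep mp = 1) (hcm : Int.gcd em mm = 1)
    (hneg : (ep : ℚ) / mp + (em : ℚ) / mm < 0) :
    (⌊(mm : ℚ) / ((((mp : ℚ) * mm) * ((ep : ℚ) / mp + (em : ℚ) / mm)) * mp)⌋ = -1
      ∧ ⌊(mp : ℚ) / ((((mp : ℚ) * mm) * ((ep : ℚ) / mp + (em : ℚ) / mm)) * mm)⌋ = -1)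
      ↔ (ep : ℚ) / mp + (em : ℚ) / mm
          ≤ -max (1 / (mp : ℚ) ^ 2) (1 / (mm : ℚ) ^ 2) := by
  have hmp' : (0:ℚ) < mp := by exact_mod_cast hmp
  have hmm' : (mm:ℚ) < 0 := by
    have : (mm:ℚ) ≤ -1 := by exact_mod_cast hmm
    linarith
  set s : ℚ := (ep:ℚ)/mp + (em:ℚ)/mm with hs
  have hD : 0 < (mp:ℚ) * mm * s :=
    mul_pos_of_neg_of_neg (mul_neg_of_pos_of_neg hmp' hmm') hneg
  set D : ℚ := (mp:ℚ) * mm * s with hDdef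
  have hDmp : 0 < D * mp := mul_pos hD hmp'
  have hDmm : D * mm < 0 := mul_neg_of_pos_of_neg hD hmm'
  have hmp2 : (0:ℚ) < (mp:ℚ)^2 := by positivity
  have hmm2 : (0:ℚ) < (mm:ℚ)^2 := by nlinarith
  have hA : ⌊(mm:ℚ) / (D * mp)⌋ = -1 ↔ -(D * mp) ≤ (mm:ℚ) := by
    rw [Int.floor_eq_iff]
    push_cast
    rw [le_div_iff₀ hDmp]
    constructor
    · rintro ⟨h, _⟩; linarith
    · intro h
      refine ⟨by linarith, ?_⟩
      have : (mm:ℚ) / (D * mp) < 0 := div_neg_of_neg_of_pos hmm' hDmp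
      linarith
  have hB : ⌊(mp:ℚ) / (D * mm)⌋ = -1 ↔ (mp:ℚ) ≤ -(D * mm) := by
    rw [Int.floor_eq_iff]
    push_cast
    rw [le_div_iff_of_neg hDmm]
    constructor
    · rintro ⟨h, _⟩; linarith
    · intro h
      refine ⟨by linarith, ?_⟩
      have : (mp:ℚ) / (D * mm) < 0 := div_neg_of_pos_of_neg hmp' hDmm
      linarith
  have h1 : s ≤ -(1 / (mp:ℚ)^2) ↔ -(D * mp) ≤ (mm:ℚ) := by
    rw [show -(1/(mp:ℚ)^2) = (-1)/(mp:ℚ)^2 by ring, le_div_iff₀ hmp2]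
    constructor
    · intro h
      nlinarith [mul_nonneg (by linarith : (0:ℚ) ≤ -(mm:ℚ))
        (by linarith : (0:ℚ) ≤ -(1 + s * (mp:ℚ)^2))]
    · intro h
      nlinarith
  have h2 : s ≤ -(1 / (mm:ℚ)^2) ↔ (mp:ℚ) ≤ -(D * mm) := by
    rw [show -(1/(mm:ℚ)^2) = (-1)/(mm:ℚ)^2 by ring, le_div_iff₀ hmm2]
    constructor
    · intro h
      nlinarith [mul_nonneg (by linarith : (0:ℚ) ≤ (mp:ℚ))
        (by linarith : (0:ℚ) ≤ -(1 + s * (mm:ℚ)^2))]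
    · intro h
      nlinarith
  have hmax : s ≤ -max (1 / (mp:ℚ)^2) (1 / (mm:ℚ)^2)
      ↔ (s ≤ -(1 / (mp:ℚ)^2) ∧ s ≤ -(1 / (mm:ℚ)^2)) := by
    rw [le_neg, max_le_iff, le_neg (b := s), le_neg (b := s)]
  rw [hA, hB, hmax, h1, h2]
end

section
/- Let m⁺ ≥ 1, m⁻ ≤ -1 be integers, q⁺ = e⁺/m⁺, q⁻ = e⁻/m⁻ in lowest terms with q⁺ + q⁻ < 0, and Δ = m⁺ m⁻ (q⁺ + q⁻) > 0. Then at least one of ⌊m⁻/(Δ m⁺)⌋ and ⌊m⁺/(Δ m⁻)⌋ equals -1. -/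
/-! Clearing denominators, Δ = e⁺m⁻ + e⁻m⁺ is an integer, so Δ ≥ 1. Of the two positive integers
m⁺ and -m⁻ the smaller, say b, satisfies b ≤ a ≤ Δ·a for the other one a, which puts the
corresponding quotient in [-1, 0). -/

section Floor

variable {K : Type*} [Field K] [LinearOrder K] [IsStrictOrderedRing K] [FloorRing K]

theorem Int.floor_div_eq_neg_one {a b : K} (ha : a < 0) (hab : -a ≤ b) : ⌊a / b⌋ = -1 := by
  have hb : 0 < b := by linarith
  rw [Int.floor_eq_iff]
  constructor
  · rw [le_div_iff₀ hb]
    push_cast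
    linarith
  · push_cast
    linarith [div_neg_of_neg_of_pos ha hb]

end Floor

theorem le_mul_or_le_mul_of_one_le {R : Type*} [Semiring R] [LinearOrder R] [IsOrderedRing R]
    {a b d : R} (ha : 0 ≤ a) (hb : 0 ≤ b) (hd : 1 ≤ d) : a ≤ d * b ∨ b ≤ d * a := by
  rcases le_total a b with hab | hba
  · exact Or.inl (hab.trans (le_mul_of_one_le_left hb hd))
  · exact Or.inr (hba.trans (le_mul_of_one_le_left ha hd))

theorem mul_mul_div_add_div_eq {K : Type*} [Field K] {p m e f : K} (hp : p ≠ 0) (hm : m ≠ 0) :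
    p * m * (e / p + f / m) = e * m + f * p := by
  field_simp

theorem stmt_7_general (mp mm ep em : ℤ) (hmp : 1 ≤ mp) (hmm : mm ≤ -1)
    (hneg : (ep : ℚ) / mp + (em : ℚ) / mm < 0) :
    ⌊(mm : ℚ) / ((((mp : ℚ) * mm) * ((ep : ℚ) / mp + (em : ℚ) / mm)) * mp)⌋ = -1
      ∨ ⌊(mp : ℚ) / ((((mp : ℚ) * mm) * ((ep : ℚ) / mp + (em : ℚ) / mm)) * mm)⌋ = -1 := by
  have hmpQ : (1 : ℚ) ≤ mp := by exact_mod_cast hmp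
  have hmmQ : (mm : ℚ) ≤ -1 := by exact_mod_cast hmm
  have hΔ : ((mp : ℚ) * mm) * ((ep : ℚ) / mp + (em : ℚ) / mm) = ((ep * mm + em * mp : ℤ) : ℚ) := by
    push_cast
    exact mul_mul_div_add_div_eq (by positivity) (by linarith)
  have hΔ_pos : (0 : ℚ) < ((ep * mm + em * mp : ℤ) : ℚ) :=
    hΔ ▸ mul_pos_of_neg_of_neg (mul_neg_of_pos_of_neg (by linarith) (by linarith)) hneg
  have hΔ_one : (1 : ℚ) ≤ ((ep * mm + em * mp : ℤ) : ℚ) := by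
    exact_mod_cast (Int.cast_pos.mp hΔ_pos : 0 < ep * mm + em * mp)
  rw [hΔ]
  rcases le_mul_or_le_mul_of_one_le (a := -(mm : ℚ)) (b := mp) (by linarith) (by linarith) hΔ_one
    with h | h
  · exact Or.inl (Int.floor_div_eq_neg_one (by linarith) h)
  · refine Or.inr ?_
    rw [← neg_div_neg_eq]
    exact Int.floor_div_eq_neg_one (by linarith) (by linarith)

/-- At least one of ⌊m⁻/(Δm⁺)⌋ and ⌊m⁺/(Δm⁻)⌋ equals -1, where
Δ = m⁺m⁻(q⁺+q⁻) > 0. -/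
theorem stmt_7 (mp mm ep em : ℤ) (hmp : 1 ≤ mp) (hmm : mm ≤ -1)
    (hcp : Int.gcd ep mp = 1) (hcm : Int.gcd em mm = 1)
    (hneg : (ep : ℚ) / mp + (em : ℚ) / mm < 0) :
    ⌊(mm : ℚ) / ((((mp : ℚ) * mm) * ((ep : ℚ) / mp + (em : ℚ) / mm)) * mp)⌋ = -1
      ∨ ⌊(mp : ℚ) / ((((mp : ℚ) * mm) * ((ep : ℚ) / mp + (em : ℚ) / mm)) * mm)⌋ = -1 :=
  stmt_7_general mp mm ep em hmp hmm hneg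
end

section
/- Let A be an integral domain over ℂ, ∂ : A → A a nonzero locally nilpotent ℂ-derivation, and u ∈ Frac(A) with u·∂(A) ⊆ A. Then u·∂ is a locally nilpotent derivation of A if and only if u ∈ Frac(ker ∂). -/
open Finset

section Aux
variable {A : Type*} [CommRing A] [IsDomain A] [Algebra ℂ A] (D : Derivation ℂ A A)

lemma iterD_zero (n : ℕ) : (⇑D)^[n] (0 : A) = 0 := by
  induction n with
  | zero => rfl
  | succ n ih => rw [Function.iterate_succ_apply', ih, map_zero]

lemma iterD_vanish {x : A} {m : ℕ} (h : (⇑D)^[m] x = 0) {k : ℕ} (hk : m ≤ k) :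
    (⇑D)^[k] x = 0 := by
  obtain ⟨j, rfl⟩ := Nat.exists_eq_add_of_le hk
  rw [add_comm, Function.iterate_add_apply, h, iterD_zero]

lemma iterD_leibniz (N : ℕ) (x y : A) :
    (⇑D)^[N] (x * y)
      = ∑ i ∈ range (N + 1), N.choose i • ((⇑D)^[i] x * (⇑D)^[N - i] y) := by
  induction N generalizing x y with
  | zero => simp
  | succ N ih =>
    rw [Function.iterate_succ_apply', ih, map_sum]
    have hterm : ∀ i ∈ range (N + 1),
        D (N.choose i • ((⇑D)^[i] x * (⇑D)^[N - i] y))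
          = N.choose i • ((⇑D)^[i + 1] x * (⇑D)^[N - i] y)
            + N.choose i • ((⇑D)^[i] x * (⇑D)^[N + 1 - i] y) := by
      intro i hi
      have hi' : i ≤ N := by simpa [Nat.lt_succ_iff] using hi
      have h1 : (N - i) + 1 = N + 1 - i := by omega
      have e1 : (⇑D)^[N + 1 - i] y = D ((⇑D)^[N - i] y) := by
        rw [show N + 1 - i = (N - i) + 1 by omega, Function.iterate_succ_apply']
      have e2 : (⇑D)^[i + 1] x = D ((⇑D)^[i] x) := Function.iterate_succ_apply' _ _ _
      rw [map_nsmul, Derivation.leibniz, e1, e2, smul_eq_mul, smul_eq_mul, smul_add,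
        add_comm]
      congr 1
      rw [mul_comm]
    rw [Finset.sum_congr rfl hterm, Finset.sum_add_distrib]
    -- RHS manipulation
    have hR : ∑ i ∈ range (N + 2), (N + 1).choose i • ((⇑D)^[i] x * (⇑D)^[N + 1 - i] y)
        = (∑ i ∈ range (N + 1), N.choose i • ((⇑D)^[i + 1] x * (⇑D)^[N - i] y))
          + ∑ i ∈ range (N + 1), N.choose i • ((⇑D)^[i] x * (⇑D)^[N + 1 - i] y) := by
      rw [Finset.sum_range_succ' _ (N + 1)]
      have hsub : ∀ i : ℕ, N + 1 - (i + 1) = N - i := fun i => by omega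
      have e1 : ∀ i ∈ range (N + 1),
          (N + 1).choose (i + 1) • ((⇑D)^[i + 1] x * (⇑D)^[N + 1 - (i + 1)] y)
            = N.choose i • ((⇑D)^[i + 1] x * (⇑D)^[N - i] y)
              + N.choose (i + 1) • ((⇑D)^[i + 1] x * (⇑D)^[N - i] y) := by
        intro i _
        rw [hsub, Nat.choose_succ_succ, add_smul]
      rw [Finset.sum_congr rfl e1, Finset.sum_add_distrib]
      have e2 : ∑ i ∈ range (N + 1), N.choose (i + 1) • ((⇑D)^[i + 1] x * (⇑D)^[N - i] y)
            + (N + 1).choose 0 • ((⇑D)^[0] x * (⇑D)^[N + 1 - 0] y)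
          = ∑ i ∈ range (N + 1), N.choose i • ((⇑D)^[i] x * (⇑D)^[N + 1 - i] y) := by
        have : ∑ i ∈ range (N + 2), N.choose i • ((⇑D)^[i] x * (⇑D)^[N + 1 - i] y)
            = ∑ i ∈ range (N + 1), N.choose i • ((⇑D)^[i] x * (⇑D)^[N + 1 - i] y) := by
          rw [Finset.sum_range_succ]
          simp [Nat.choose_succ_self]
        rw [← this, Finset.sum_range_succ' _ (N + 1)]
        congr 1
        · apply Finset.sum_congr rfl
          intro i _
          rw [hsub]
        · simp
      rw [add_assoc, e2]
    rw [hR]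

end Aux

section Aux2
variable {A : Type*} [CommRing A] [IsDomain A] [Algebra ℂ A] (D : Derivation ℂ A A)

lemma iterD_const_mul {q : A} (hq : D q = 0) (n : ℕ) (x : A) :
    (⇑D)^[n] (q * x) = q * (⇑D)^[n] x := by
  induction n generalizing x with
  | zero => rfl
  | succ n ih =>
    rw [Function.iterate_succ_apply, Function.iterate_succ_apply]
    have : D (q * x) = q * D x := by
      rw [Derivation.leibniz, hq, smul_eq_mul, smul_zero, add_zero]
    rw [this, ih]

lemma exists_deg (hL : ∀ f : A, ∃ n : ℕ, (⇑D)^[n] f = 0) {g : A} (hg : g ≠ 0) :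
    ∃ m : ℕ, (⇑D)^[m] g ≠ 0 ∧ (⇑D)^[m + 1] g = 0 := by
  classical
  have hspec := Nat.find_spec (hL g)
  have hN : Nat.find (hL g) ≠ 0 := by
    intro h0
    rw [h0] at hspec
    exact hg hspec
  refine ⟨Nat.find (hL g) - 1, Nat.find_min (hL g) (by omega), ?_⟩
  rw [show Nat.find (hL g) - 1 + 1 = Nat.find (hL g) by omega]
  exact hspec

lemma deg_mul {x y : A} {m n : ℕ}
    (hx2 : (⇑D)^[m] x ≠ 0) (hx1 : (⇑D)^[m + 1] x = 0)
    (hy2 : (⇑D)^[n] y ≠ 0) (hy1 : (⇑D)^[n + 1] y = 0) :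
    (⇑D)^[m + n] (x * y) ≠ 0 ∧ (⇑D)^[m + n + 1] (x * y) = 0 := by
  haveI : CharZero A :=
    charZero_of_injective_algebraMap (RingHom.injective (algebraMap ℂ A))
  constructor
  · rw [iterD_leibniz]
    have hsingle : ∑ i ∈ range (m + n + 1),
        (m + n).choose i • ((⇑D)^[i] x * (⇑D)^[m + n - i] y)
        = (m + n).choose m • ((⇑D)^[m] x * (⇑D)^[n] y) := by
      rw [Finset.sum_eq_single m]
      · rw [show m + n - m = n by omega]
      · intro i hi hne
        rcases lt_or_gt_of_ne hne with h | h
        · have : (⇑D)^[m + n - i] y = 0 := iterD_vanish D hy1 (by omega)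
          rw [this, mul_zero, smul_zero]
        · have : (⇑D)^[i] x = 0 := iterD_vanish D hx1 (by omega)
          rw [this, zero_mul, smul_zero]
      · intro h
        exact absurd (Finset.mem_range.mpr (by omega)) h
    rw [hsingle, nsmul_eq_mul]
    exact mul_ne_zero (Nat.cast_ne_zero.mpr (Nat.choose_pos (Nat.le_add_right m n)).ne')
      (mul_ne_zero hx2 hy2)
  · rw [iterD_leibniz]
    apply Finset.sum_eq_zero
    intro i hi
    by_cases h : i ≤ m
    · have : (⇑D)^[m + n + 1 - i] y = 0 := iterD_vanish D hy1 (by omega)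
      rw [this, mul_zero, smul_zero]
    · have : (⇑D)^[i] x = 0 := iterD_vanish D hx1 (by omega)
      rw [this, zero_mul, smul_zero]

end Aux2

/-- Let A be a ℂ-domain, D a nonzero locally nilpotent derivation, u an element
of Frac(A) with u·D(A) ⊆ A (witnessed by the derivation D' with
D' a = u·D a in Frac(A)). Then u·D is locally nilpotent iff u ∈ Frac(ker D). -/
theorem stmt_12 {A : Type*} [CommRing A] [IsDomain A] [Algebra ℂ A]
    (D D' : Derivation ℂ A A) (hDne : D ≠ 0)
    (hLND : ∀ f : A, ∃ n : ℕ, (fun x => D x)^[n] f = 0)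
    (u : FractionRing A)
    (hD' : ∀ a : A,
      algebraMap A (FractionRing A) (D' a) = u * algebraMap A (FractionRing A) (D a)) :
    (∀ f : A, ∃ n : ℕ, (fun x => D' x)^[n] f = 0) ↔
      ∃ p q : A, D p = 0 ∧ D q = 0 ∧ q ≠ 0 ∧
        u = algebraMap A (FractionRing A) p / algebraMap A (FractionRing A) q := by
  classical
  have inj : Function.Injective (algebraMap A (FractionRing A)) :=
    IsFractionRing.injective A (FractionRing A)
  have algne : ∀ z : A, z ≠ 0 → algebraMap A (FractionRing A) z ≠ 0 := by
    intro z hz h0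
    exact hz (inj (by rw [h0, map_zero]))
  have hLND2 : ∀ f : A, ∃ n : ℕ, (⇑D)^[n] f = 0 := hLND
  constructor
  · intro hE
    have hE2 : ∀ f : A, ∃ n : ℕ, (⇑D')^[n] f = 0 := hE
    by_cases hu : u = 0
    · exact ⟨0, 1, map_zero D, D.map_one_eq_zero, one_ne_zero, by simp [hu]⟩
    obtain ⟨r, hs_ne, hs0⟩ : ∃ r : A, D r ≠ 0 ∧ D (D r) = 0 := by
      obtain ⟨f₀, hf₀⟩ : ∃ f : A, D f ≠ 0 := by
        by_contra hc
        push_neg at hc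
        exact hDne (Derivation.ext fun a => by simp [hc a])
      have hspec : (⇑D)^[Nat.find (hLND2 f₀)] f₀ = 0 := Nat.find_spec (hLND2 f₀)
      have h2N : 2 ≤ Nat.find (hLND2 f₀) := by
        by_contra hlt
        push_neg at hlt
        have h1 : (⇑D)^[1] f₀ = 0 := iterD_vanish D hspec (by omega)
        exact hf₀ (by simpa using h1)
      refine ⟨(⇑D)^[Nat.find (hLND2 f₀) - 2] f₀, ?_, ?_⟩
      · have e : D ((⇑D)^[Nat.find (hLND2 f₀) - 2] f₀)
            = (⇑D)^[Nat.find (hLND2 f₀) - 1] f₀ := by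
          rw [← Function.iterate_succ_apply' D]
          congr 1
          omega
        rw [e]
        exact Nat.find_min (hLND2 f₀) (by omega)
      · have e : D (D ((⇑D)^[Nat.find (hLND2 f₀) - 2] f₀))
            = (⇑D)^[Nat.find (hLND2 f₀)] f₀ := by
          rw [← Function.iterate_succ_apply' D, ← Function.iterate_succ_apply' D]
          congr 1
          omega
        rw [e]
        exact hspec
    have hkey : ∀ f : A, D r * D' f = D' r * D f := by
      intro f
      apply inj
      rw [map_mul, map_mul, hD', hD' r]
      ring
    have ha_ne : D' r ≠ 0 := by
      intro h0
      apply hu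
      have hthis := hD' r
      rw [h0, map_zero] at hthis
      rcases mul_eq_zero.mp hthis.symm with h | h
      · exact h
      · exact absurd h (algne _ hs_ne)
    have hDa : D (D' r) = 0 := by
      by_contra hDa
      obtain ⟨α, hα1, hα2⟩ := exists_deg D hLND2 ha_ne
      have hα : 1 ≤ α := by
        rcases Nat.eq_zero_or_pos α with h | h
        · rw [h] at hα2
          exact absurd (by simpa using hα2) hDa
        · exact h
      have em : ∀ (j : ℕ) (x : A), (⇑D)^[j + 1] x = (⇑D)^[j] (D x) := fun j x =>
        Function.iterate_succ_apply (⇑D) j x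
      have main : ∀ k : ℕ, ∃ m : ℕ, 1 ≤ m ∧ (⇑D)^[m] ((⇑D')^[k] r) ≠ 0 ∧
          (⇑D)^[m + 1] ((⇑D')^[k] r) = 0 := by
        intro k
        induction k with
        | zero => exact ⟨1, le_rfl, hs_ne, hs0⟩
        | succ k ih =>
          obtain ⟨m, hm1, hm2, hm3⟩ := ih
          set g := (⇑D')^[k] r with hgdef
          have hDg_ne : D g ≠ 0 := by
            intro h0
            apply hm2
            rw [show m = m - 1 + 1 by omega, em, h0, iterD_zero]
          have hDg2 : (⇑D)^[m - 1] (D g) ≠ 0 := by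
            rw [← em, show m - 1 + 1 = m by omega]
            exact hm2
          have hDg1 : (⇑D)^[m - 1 + 1] (D g) = 0 := by
            rw [← em, show m - 1 + 1 + 1 = m + 1 by omega]
            exact hm3
          have hprod := deg_mul D hα1 hα2 hDg2 hDg1
          have hD'g_ne : D' g ≠ 0 := by
            intro h0
            have hk := hkey g
            rw [h0, mul_zero] at hk
            exact (mul_ne_zero ha_ne hDg_ne) hk.symm
          obtain ⟨m', hm'2, hm'1⟩ := exists_deg D hLND2 hD'g_ne
          have hs_deg2 : (⇑D)^[0] (D r) ≠ 0 := hs_ne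
          have hs_deg1 : (⇑D)^[0 + 1] (D r) = 0 := hs0
          have hsprod := deg_mul D hs_deg2 hs_deg1 hm'2 hm'1
          rw [hkey g] at hsprod
          have heq : m' = α + (m - 1) := by
            have le1 : m' ≤ α + (m - 1) := by
              by_contra hlt
              push_neg at hlt
              exact hsprod.1 (iterD_vanish D hprod.2 (by omega))
            have le2 : α + (m - 1) ≤ m' := by
              by_contra hlt
              push_neg at hlt
              exact hprod.1 (iterD_vanish D hsprod.2 (by omega))
            omega
          refine ⟨m', by omega, ?_, ?_⟩
          · rw [Function.iterate_succ_apply' (⇑D'), ← hgdef]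
            exact hm'2
          · rw [Function.iterate_succ_apply' (⇑D'), ← hgdef]
            exact hm'1
      obtain ⟨n, hn⟩ := hE2 r
      obtain ⟨m, _, hm2, _⟩ := main n
      exact hm2 (by rw [hn, iterD_zero])
    refine ⟨D' r, D r, hDa, hs0, hs_ne, ?_⟩
    rw [eq_div_iff (algne _ hs_ne)]
    exact (hD' r).symm
  · rintro ⟨p, q, hp, hq, hq0, hu⟩ f
    have hq' : algebraMap A (FractionRing A) q ≠ 0 := algne q hq0
    have hqD' : ∀ x : A, q * D' x = p * D x := by
      intro x
      apply inj
      rw [map_mul, map_mul, hD', hu]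
      field_simp
    have key : ∀ n : ℕ, ∀ x : A, q ^ n * (⇑D')^[n] x = p ^ n * (⇑D)^[n] x := by
      intro n
      induction n with
      | zero => intro x; simp
      | succ n ih =>
        intro x
        rw [Function.iterate_succ_apply (⇑D'), Function.iterate_succ_apply (⇑D)]
        calc q ^ (n + 1) * (⇑D')^[n] (D' x)
            = q * (q ^ n * (⇑D')^[n] (D' x)) := by ring
          _ = q * (p ^ n * (⇑D)^[n] (D' x)) := by rw [ih]
          _ = p ^ n * (q * (⇑D)^[n] (D' x)) := by ring
          _ = p ^ n * ((⇑D)^[n] (q * D' x)) := by rw [iterD_const_mul D hq]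
          _ = p ^ n * ((⇑D)^[n] (p * D x)) := by rw [hqD']
          _ = p ^ n * (p * (⇑D)^[n] (D x)) := by rw [iterD_const_mul D hp]
          _ = p ^ (n + 1) * (⇑D)^[n] (D x) := by ring
    obtain ⟨n, hn⟩ := hLND2 f
    refine ⟨n, ?_⟩
    have hk := key n f
    rw [hn, mul_zero] at hk
    rcases mul_eq_zero.mp hk with h | h
    · exact absurd h (pow_ne_zero n hq0)
    · exact h
end

section
/- Let A be an integral domain of characteristic zero and ∂ a locally nilpotent derivation of A. Then the kernel ker ∂ is factorially closed in A: if a, b ∈ A are nonzero and a·b ∈ ker ∂, then a ∈ ker ∂ and b ∈ ker ∂. -/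
open Finset in
/-- Iterated Leibniz rule for a derivation. -/
lemma iter_leibniz {A : Type*} [CommRing A] [Algebra ℚ A] (D : Derivation ℚ A A)
    (a b : A) : ∀ k : ℕ, (⇑D)^[k] (a * b) =
      ∑ i ∈ Finset.range (k + 1), k.choose i • ((⇑D)^[i] a * (⇑D)^[k - i] b) := by
  intro k
  induction k with
  | zero => simp
  | succ k ih =>
      rw [Function.iterate_succ_apply', ih, map_sum]
      have step : ∀ i ∈ Finset.range (k + 1),
          D (k.choose i • ((⇑D)^[i] a * (⇑D)^[k - i] b)) =
            k.choose i • ((⇑D)^[i + 1] a * (⇑D)^[k - i] b) +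
            k.choose i • ((⇑D)^[i] a * (⇑D)^[k - i + 1] b) := by
        intro i _
        have e1 : (⇑D)^[i + 1] a = D ((⇑D)^[i] a) := Function.iterate_succ_apply' D i a
        have e2 : (⇑D)^[k - i + 1] b = D ((⇑D)^[k - i] b) :=
          Function.iterate_succ_apply' D (k - i) b
        rw [map_nsmul, Derivation.leibniz, e1, e2, smul_eq_mul, smul_eq_mul, ← smul_add]
        congr 1
        ring
      rw [Finset.sum_congr rfl step, Finset.sum_add_distrib]
      have hS2 : ∑ i ∈ Finset.range (k + 1), k.choose i • ((⇑D)^[i] a * (⇑D)^[k - i + 1] b)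
          = ∑ i ∈ Finset.range (k + 1),
              k.choose (i + 1) • ((⇑D)^[i + 1] a * (⇑D)^[k - i] b)
            + k.choose 0 • ((⇑D)^[0] a * (⇑D)^[k + 1] b) := by
        have e := Finset.sum_range_succ'
          (fun i => k.choose i • ((⇑D)^[i] a * (⇑D)^[k + 1 - i] b)) (k + 1)
        simp only [Nat.succ_sub_succ, Nat.sub_zero] at e
        rw [← e]
        conv_rhs => rw [Finset.sum_range_succ]
        rw [Nat.choose_succ_self, zero_smul, add_zero]
        apply Finset.sum_congr rfl
        intro i hi
        rw [Finset.mem_range] at hi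
        have h3 : k + 1 - i = k - i + 1 := by omega
        rw [h3]
      rw [hS2]
      have e2 := Finset.sum_range_succ'
        (fun i => (k + 1).choose i • ((⇑D)^[i] a * (⇑D)^[k + 1 - i] b)) (k + 1)
      simp only [Nat.succ_sub_succ, Nat.sub_zero] at e2
      rw [e2]
      simp only [Nat.choose_succ_succ, add_smul, Finset.sum_add_distrib,
        Nat.choose_zero_right]
      ring

/-- The kernel of a locally nilpotent derivation on a domain of characteristic
zero is factorially closed: if a·b is a constant with a, b ≠ 0, then both a and
b are constants. -/
theorem stmt_13 {A : Type*} [CommRing A] [IsDomain A] [Algebra ℚ A]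
    (D : Derivation ℚ A A)
    (hLND : ∀ f : A, ∃ n : ℕ, (fun x => D x)^[n] f = 0)
    (a b : A) (ha : a ≠ 0) (hb : b ≠ 0) (hab : D (a * b) = 0) :
    D a = 0 ∧ D b = 0 := by
  classical
  have hd : ∀ f : A, ∃ n : ℕ, (⇑D)^[n] f = 0 := hLND
  have hfix : ∀ j : ℕ, (⇑D)^[j] (0 : A) = 0 :=
    fun j => Function.iterate_fixed (map_zero D) j
  -- minimal vanishing index
  have key : ∀ f : A, f ≠ 0 → ∃ m : ℕ, (⇑D)^[m] f ≠ 0 ∧ (⇑D)^[m + 1] f = 0 := by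
    intro f hf
    have h := Nat.find_spec (hd f)
    have hpos : 0 < Nat.find (hd f) := by
      rcases Nat.eq_zero_or_pos (Nat.find (hd f)) with h0 | h0
      · exfalso; apply hf; rwa [h0] at h
      · exact h0
    refine ⟨Nat.find (hd f) - 1, ?_, ?_⟩
    · exact Nat.find_min (hd f) (by omega)
    · rwa [Nat.sub_add_cancel hpos]
  obtain ⟨m, hm1, hm2⟩ := key a ha
  obtain ⟨n, hn1, hn2⟩ := key b hb
  -- all higher iterates vanish
  have hma : ∀ i, m < i → (⇑D)^[i] a = 0 := by
    intro i hi
    obtain ⟨j, rfl⟩ : ∃ j, i = j + (m + 1) := ⟨i - (m + 1), by omega⟩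
    rw [Function.iterate_add_apply, hm2]
    exact hfix j
  have hnb : ∀ i, n < i → (⇑D)^[i] b = 0 := by
    intro i hi
    obtain ⟨j, rfl⟩ : ∃ j, i = j + (n + 1) := ⟨i - (n + 1), by omega⟩
    rw [Function.iterate_add_apply, hn2]
    exact hfix j
  -- claim m = 0 and n = 0
  have hmn : m + n = 0 := by
    by_contra hmn
    have hzero : (⇑D)^[m + n] (a * b) = 0 := by
      have h1 : m + n = (m + n - 1) + 1 := by omega
      rw [h1, Function.iterate_succ_apply, hab]
      exact hfix _
    rw [iter_leibniz] at hzero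
    have honly : ∑ i ∈ Finset.range (m + n + 1),
        (m + n).choose i • ((⇑D)^[i] a * (⇑D)^[m + n - i] b)
        = (m + n).choose m • ((⇑D)^[m] a * (⇑D)^[n] b) := by
      rw [Finset.sum_eq_single m]
      · have h3 : m + n - m = n := by omega
        rw [h3]
      · intro i hi hne
        rcases Nat.lt_or_ge m i with h | h
        · rw [hma i h, zero_mul, smul_zero]
        · have : n < m + n - i := by omega
          rw [hnb _ this, mul_zero, smul_zero]
      · intro h; exfalso; apply h; rw [Finset.mem_range]; omega
    rw [honly] at hzero
    have : ((⇑D)^[m] a * (⇑D)^[n] b) = 0 := by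
      rw [← Nat.cast_smul_eq_nsmul ℚ] at hzero
      refine (smul_eq_zero.mp hzero).resolve_left ?_
      have hc : 0 < (m + n).choose m := Nat.choose_pos (by omega)
      exact_mod_cast hc.ne'
    exact (mul_ne_zero hm1 hn1) this
  have hm0 : m = 0 := by omega
  have hn0 : n = 0 := by omega
  subst hm0; subst hn0
  constructor
  · simpa using hm2
  · simpa using hn2
end
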